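/- Let A be a k-algebra admitting an ℕ-filtration F such that gr_F(A) is a firm domain. Then A itself is a firm domain. (Lemma 2.1(1).) -/

import Mathlib

open scoped TensorProduct ENNReal

universe u v

variable (k : Type v) [Field k]

/-- An ℕ-filtration of a `k`-algebra `A`: an ascending chain of `k`-subspaces
`F 0 ⊆ F 1 ⊆ ⋯` with `k·1 ⊆ F 0`, `⋃ᵢ F i = A` and `F i * F j ⊆ F (i + j)`. -/
structure AlgFiltration (A : Type u) [Ring A] [Algebra k A] where
  F : ℕ → Submodule k A
  one_mem : (1 : A) ∈ F 0
  mono : ∀ i, F i ≤ F (i + 1)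
  exhaustive : ∀ a : A, ∃ i, a ∈ F i
  mul_mem : ∀ i j : ℕ, ∀ x ∈ F i, ∀ y ∈ F j, x * y ∈ F (i + j)

namespace AlgFiltration

variable {k} {A : Type u} [Ring A] [Algebra k A] (𝓕 : AlgFiltration k A)

/-- The Rees algebra `⊕ᵢ (F i) Xⁱ ⊆ A[X]` of a filtration. -/
def rees : Subalgebra k (Polynomial A) where
  carrier := {p | ∀ i, p.coeff i ∈ 𝓕.F i}
  add_mem' := fun hp hq i => by
    simpa using (𝓕.F i).add_mem (hp i) (hq i)
  mul_mem' := fun {p q} hp hq i => by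
    show (p * q).coeff i ∈ 𝓕.F i
    rw [Polynomial.coeff_mul]
    refine Submodule.sum_mem _ fun x hx => ?_
    have h := 𝓕.mul_mem x.1 x.2 _ (hp x.1) _ (hq x.2)
    rwa [show x.1 + x.2 = i from by simpa using hx] at h
  algebraMap_mem' := fun c i => by
    rcases i with _ | i
    · simpa [Polynomial.algebraMap_apply, Algebra.algebraMap_eq_smul_one] using
        (𝓕.F 0).smul_mem c 𝓕.one_mem
    · simp [Polynomial.algebraMap_apply]

/-- The element `X` of the Rees algebra. -/
noncomputable def xElem : 𝓕.rees :=
  ⟨Polynomial.X, fun i => by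
    rcases i with _ | _ | i
    · simp
    · simpa [Polynomial.coeff_X] using 𝓕.mono 0 𝓕.one_mem
    · simp [Polynomial.coeff_X]⟩

/-- The associated graded algebra `gr_F(A) = ⊕ᵢ F i / F (i-1)` of a filtration, realized as
the Rees algebra modulo the two-sided ideal generated by the central element `X`. -/
def gr : Type u := RingQuot (fun a b : 𝓕.rees => a = 𝓕.xElem ∧ b = 0)

noncomputable instance : Ring 𝓕.gr :=
  inferInstanceAs (Ring (RingQuot (fun a b : 𝓕.rees => a = 𝓕.xElem ∧ b = 0)))

noncomputable instance : Algebra k 𝓕.gr :=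
  inferInstanceAs (Algebra k (RingQuot (fun a b : 𝓕.rees => a = 𝓕.xElem ∧ b = 0)))

/-- The `k`-linear map sending `a ∈ F i` to the monomial `a Xⁱ` in the Rees algebra. -/
noncomputable def monoMap (i : ℕ) : 𝓕.F i →ₗ[k] 𝓕.rees where
  toFun a :=
    ⟨Polynomial.monomial i (a : A), fun j => by
      rcases eq_or_ne j i with rfl | h
      · simp only [Polynomial.coeff_monomial, if_pos rfl]
        exact a.2
      · simp [Polynomial.coeff_monomial, h, Ne.symm h]⟩
  map_add' a b := by
    ext
    simp
  map_smul' c a := by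
    ext
    simp

/-- The canonical projection from the Rees algebra onto the associated graded algebra. -/
noncomputable def grProj : 𝓕.rees →ₐ[k] 𝓕.gr :=
  RingQuot.mkAlgHom k (fun a b : 𝓕.rees => a = 𝓕.xElem ∧ b = 0)

/-- The degree-`i` homogeneous component `F i / F (i-1)` of the associated graded algebra,
realized as the image of `(F i) Xⁱ` under the projection. -/
noncomputable def grPiece (i : ℕ) : Submodule k 𝓕.gr :=
  LinearMap.range (𝓕.grProj.toLinearMap ∘ₗ 𝓕.monoMap i)

end AlgFiltration

/-- A `k`-algebra `A` is a firm domain if `A ⊗[k] B` is a domain for every `k`-algebra `B`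
which is a domain. -/
def IsFirmDomain (A : Type u) [Ring A] [Algebra k A] : Prop :=
  ∀ (B : Type u) [Ring B] [Algebra k B], IsDomain B → IsDomain (A ⊗[k] B)

/-- A filtration is good if its associated graded algebra is a domain.
`uGood k A` is the subspace of universally degree-`0` elements with respect to good
ℕ-filtrations: the intersection of `F 0` over all good ℕ-filtrations of `A`. -/
noncomputable def uGood (A : Type u) [Ring A] [Algebra k A] : Submodule k A :=
  ⨅ (𝓕 : AlgFiltration k A) (_ : IsDomain 𝓕.gr), 𝓕.F 0

/-- A filtration is firm if its associated graded algebra is a firm domain.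
`uFirm k A` is the intersection of `F 0` over all firm ℕ-filtrations of `A`. -/
noncomputable def uFirm (A : Type u) [Ring A] [Algebra k A] : Submodule k A :=
  ⨅ (𝓕 : AlgFiltration k A) (_ : IsFirmDomain k 𝓕.gr), 𝓕.F 0

/-- The Gelfand–Kirillov dimension of a `k`-algebra `A`: the supremum, over all
finite-dimensional subspaces `V ⊆ A` containing `1`, of `limsup_n log(dim Vⁿ)/log n`. -/
noncomputable def GKdim (A : Type u) [Ring A] [Algebra k A] : ℝ≥0∞ :=
  ⨆ (V : Submodule k A) (_ : (1 : A) ∈ V) (_ : FiniteDimensional k V),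
    Filter.limsup
      (fun n : ℕ => ENNReal.ofReal (Real.log (Module.finrank k ↥(V ^ n)) / Real.log n))
      Filter.atTop

/-- `R` is GKdim-additive if it has finite GK-dimension and
`GKdim (A ⊗ R) = GKdim A + GKdim R` for every `k`-algebra `A`. -/
def IsGKAdditive (R : Type u) [Ring R] [Algebra k R] : Prop :=
  GKdim k R < ⊤ ∧
    ∀ (A : Type u) [Ring A] [Algebra k A], GKdim k (A ⊗[k] R) = GKdim k A + GKdim k R

/-- Membership in the family `𝓡₁` of GKdim-additive firm domains `R` with `u_firm(R) = k·1`. -/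
def InR1 (R : Type u) [Ring R] [Algebra k R] : Prop :=
  IsGKAdditive k R ∧ IsFirmDomain k R ∧ uFirm k R = 1

/-- Membership in the family `𝓡₂` of GKdim-additive domains `R` with `u_good(R) = k·1`. -/
def InR2 (R : Type u) [Ring R] [Algebra k R] : Prop :=
  IsGKAdditive k R ∧ IsDomain R ∧ uGood k R = 1

/-- The canonical image of `P ⊗ Q` in `M ⊗[k] N`, for subspaces `P ⊆ M` and `Q ⊆ N`. -/
def tensorSub {M N : Type u} [Ring M] [Ring N] [Algebra k M] [Algebra k N]
    (P : Submodule k M) (Q : Submodule k N) : Submodule k (M ⊗[k] N) :=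
  Submodule.span k {z | ∃ x ∈ P, ∃ y ∈ Q, z = x ⊗ₜ[k] y}

/-!
Every nonzero `x ∈ A ⊗ B` lies in some `F d ⊗ B`; take `d` minimal. Since `B` is flat over `k`,
tensoring the exact sequences `0 → F (d-1) → F d → gr_d → 0` with `B` shows that the image of `x`
in `gr_d ⊗ B` (its leading symbol) is nonzero. Leading symbols multiply, so a product of two
nonzero elements has a nonzero image in the domain `gr ⊗ B`, hence is nonzero.
-/

namespace AlgFiltration

variable {k} {A : Type u} [Ring A] [Algebra k A] (𝓕 : AlgFiltration k A)

abbrev grRel : 𝓕.rees → 𝓕.rees → Prop := fun a b => a = 𝓕.xElem ∧ b = 0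

lemma commute_xElem (p : 𝓕.rees) : Commute 𝓕.xElem p :=
  Subtype.ext (Polynomial.commute_X (p : Polynomial A))

noncomputable def xIdeal : TwoSidedIdeal 𝓕.rees :=
  TwoSidedIdeal.mk' {p | ∃ q, p = 𝓕.xElem * q} ⟨0, (mul_zero _).symm⟩
    (fun ⟨q, hq⟩ ⟨q', hq'⟩ => ⟨q + q', by rw [hq, hq', mul_add]⟩)
    (fun ⟨q, hq⟩ => ⟨-q, Subtype.ext (by simp [hq])⟩)
    (fun {x _} ⟨q, hq⟩ => ⟨x * q, by rw [hq, ← mul_assoc, ← (𝓕.commute_xElem x).eq, mul_assoc]⟩)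
    (fun {_ y} ⟨q, hq⟩ => ⟨q * y, by rw [hq, mul_assoc]⟩)

lemma mem_xIdeal {p : 𝓕.rees} : p ∈ 𝓕.xIdeal ↔ ∃ q, p = 𝓕.xElem * q :=
  TwoSidedIdeal.mem_mk' ..

lemma grProj_xElem : 𝓕.grProj 𝓕.xElem = 0 := by
  rw [← map_zero 𝓕.grProj]
  exact RingQuot.mkAlgHom_rel k (⟨rfl, rfl⟩ : 𝓕.grRel 𝓕.xElem 0)

lemma exists_eq_xElem_mul_of_grProj_eq_zero {p : 𝓕.rees} (hp : 𝓕.grProj p = 0) :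
    ∃ q, p = 𝓕.xElem * q := by
  have hrel : RingConGen.Rel 𝓕.grRel p 0 := by
    rw [← RingQuot.eqvGen_rel_eq]
    have h : RingQuot.mkRingHom 𝓕.grRel p = RingQuot.mkRingHom 𝓕.grRel 0 := by
      rw [← RingQuot.mkAlgHom_coe k, RingHom.coe_coe, map_zero]
      exact hp
    rw [RingQuot.mkRingHom_def] at h
    exact Quot.eq.mp (congrArg RingQuot.toQuot h)
  have hle : ringConGen 𝓕.grRel ≤ 𝓕.xIdeal.ringCon := by
    refine RingCon.ringConGen_le.mpr fun a b ⟨ha, hb⟩ => ?_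
    rw [TwoSidedIdeal.rel_iff, ha, hb, sub_zero]
    exact 𝓕.mem_xIdeal.mpr ⟨1, (mul_one _).symm⟩
  have hmem := (TwoSidedIdeal.rel_iff _ _ _).mp (hle hrel)
  rw [sub_zero] at hmem
  exact 𝓕.mem_xIdeal.mp hmem

noncomputable def symbol (d : ℕ) : 𝓕.F d →ₗ[k] 𝓕.gr :=
  𝓕.grProj.toLinearMap ∘ₗ 𝓕.monoMap d

lemma symbol_apply (d : ℕ) (a : 𝓕.F d) : 𝓕.symbol d a = 𝓕.grProj (𝓕.monoMap d a) := rfl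

lemma coe_monoMap (d : ℕ) (a : 𝓕.F d) :
    ((𝓕.monoMap d a : 𝓕.rees) : Polynomial A) = Polynomial.monomial d (a : A) := rfl

lemma symbol_zero_injective : Function.Injective (𝓕.symbol 0) := by
  refine (injective_iff_map_eq_zero _).mpr fun a ha => Subtype.ext ?_
  obtain ⟨q, hq⟩ := 𝓕.exists_eq_xElem_mul_of_grProj_eq_zero ha
  have h := congrArg (fun p : 𝓕.rees => (p : Polynomial A).coeff 0) hq
  simpa [coe_monoMap, xElem] using h

lemma symbol_succ_eq_zero_iff (d : ℕ) (a : 𝓕.F (d + 1)) :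
    𝓕.symbol (d + 1) a = 0 ↔ (a : A) ∈ 𝓕.F d := by
  constructor
  · intro ha
    obtain ⟨q, hq⟩ := 𝓕.exists_eq_xElem_mul_of_grProj_eq_zero ha
    have h := congrArg (fun p : 𝓕.rees => (p : Polynomial A).coeff (d + 1)) hq
    simp only [coe_monoMap, Polynomial.coeff_monomial_same, Subalgebra.coe_mul, xElem,
      Polynomial.coeff_X_mul] at h
    exact h ▸ q.2 d
  · intro ha
    have hX : 𝓕.monoMap (d + 1) a = 𝓕.xElem * 𝓕.monoMap d ⟨a, ha⟩ :=
      Subtype.ext (Polynomial.X_mul_monomial d (a : A)).symm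
    rw [symbol_apply, hX, map_mul, grProj_xElem, zero_mul]

lemma exact_inclusion_symbol (d : ℕ) :
    Function.Exact (Submodule.inclusion (𝓕.mono d)) (𝓕.symbol (d + 1)) := fun a => by
  rw [𝓕.symbol_succ_eq_zero_iff d a]
  exact ⟨fun ha => ⟨⟨a, ha⟩, rfl⟩, by rintro ⟨b, rfl⟩; exact b.2⟩

lemma symbol_mul (d e : ℕ) (a : 𝓕.F d) (b : 𝓕.F e) :
    𝓕.symbol (d + e) ⟨a * b, 𝓕.mul_mem d e _ a.2 _ b.2⟩ = 𝓕.symbol d a * 𝓕.symbol e b := by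
  rw [symbol_apply, symbol_apply, symbol_apply, ← map_mul]
  congr 1
  exact Subtype.ext (Polynomial.monomial_mul_monomial d e (a : A) b).symm

lemma nontrivial_of_nontrivial_gr [Nontrivial 𝓕.gr] : Nontrivial A := by
  by_contra hA
  have : Subsingleton A := not_nontrivial_iff_subsingleton.mp hA
  exact not_subsingleton 𝓕.gr (RingQuot.mkAlgHom_surjective k 𝓕.grRel).subsingleton

section Tensor

variable (B : Type*) [Ring B] [Algebra k B]

noncomputable def inclTensor (d : ℕ) : 𝓕.F d ⊗[k] B →ₗ[k] A ⊗[k] B :=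
  (𝓕.F d).subtype.rTensor B

noncomputable def symbolTensor (d : ℕ) : 𝓕.F d ⊗[k] B →ₗ[k] 𝓕.gr ⊗[k] B :=
  (𝓕.symbol d).rTensor B

lemma inclTensor_injective (d : ℕ) : Function.Injective (𝓕.inclTensor B d) :=
  Module.Flat.rTensor_preserves_injective_linearMap _ (𝓕.F d).injective_subtype

lemma inclTensor_comp_rTensor_inclusion (d : ℕ) :
    𝓕.inclTensor B (d + 1) ∘ₗ (Submodule.inclusion (𝓕.mono d)).rTensor B = 𝓕.inclTensor B d := by
  rw [inclTensor, inclTensor, ← LinearMap.rTensor_comp]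
  rfl

lemma range_inclTensor_mono {d e : ℕ} (h : d ≤ e) :
    LinearMap.range (𝓕.inclTensor B d) ≤ LinearMap.range (𝓕.inclTensor B e) := by
  induction e, h using Nat.le_induction with
  | base => exact le_rfl
  | succ e _ ih =>
    rw [← 𝓕.inclTensor_comp_rTensor_inclusion B e] at ih
    exact ih.trans (LinearMap.range_comp_le_range _ _)

lemma exists_mem_range_inclTensor (x : A ⊗[k] B) :
    ∃ d, x ∈ LinearMap.range (𝓕.inclTensor B d) := by
  induction x with
  | zero => exact ⟨0, zero_mem _⟩
  | tmul a b =>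
    obtain ⟨d, hd⟩ := 𝓕.exhaustive a
    exact ⟨d, ⟨⟨a, hd⟩ ⊗ₜ b, rfl⟩⟩
  | add x y hx hy =>
    obtain ⟨d, hx⟩ := hx
    obtain ⟨e, hy⟩ := hy
    exact ⟨max d e, add_mem (𝓕.range_inclTensor_mono B (le_max_left d e) hx)
      (𝓕.range_inclTensor_mono B (le_max_right d e) hy)⟩

lemma exists_symbolTensor_ne_zero {x : A ⊗[k] B} (hx : x ≠ 0) :
    ∃ (d : ℕ) (u : 𝓕.F d ⊗[k] B), 𝓕.inclTensor B d u = x ∧ 𝓕.symbolTensor B d u ≠ 0 := by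
  obtain ⟨d, u, hu⟩ := 𝓕.exists_mem_range_inclTensor B x
  induction d with
  | zero =>
    refine ⟨0, u, hu, fun hσ => hx ?_⟩
    have hinj : Function.Injective (𝓕.symbolTensor B 0) :=
      Module.Flat.rTensor_preserves_injective_linearMap _ 𝓕.symbol_zero_injective
    rw [← hu, hinj (hσ.trans (map_zero _).symm), map_zero]
  | succ d ih =>
    by_cases hσ : 𝓕.symbolTensor B (d + 1) u = 0
    · obtain ⟨u', hu'⟩ := (Module.Flat.rTensor_exact B (𝓕.exact_inclusion_symbol d) u).mp hσ
      refine ih u' ?_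
      rw [← 𝓕.inclTensor_comp_rTensor_inclusion B d, LinearMap.comp_apply, hu', hu]
    · exact ⟨d + 1, u, hu, hσ⟩

lemma exists_inclTensor_mul_symbolTensor_mul (d e : ℕ) (u : 𝓕.F d ⊗[k] B)
    (v : 𝓕.F e ⊗[k] B) : ∃ w : 𝓕.F (d + e) ⊗[k] B,
      𝓕.inclTensor B (d + e) w = 𝓕.inclTensor B d u * 𝓕.inclTensor B e v ∧
      𝓕.symbolTensor B (d + e) w = 𝓕.symbolTensor B d u * 𝓕.symbolTensor B e v := by
  induction u with
  | zero => exact ⟨0, by simp, by simp⟩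
  | tmul a b =>
    induction v with
    | zero => exact ⟨0, by simp, by simp⟩
    | tmul a' b' =>
      refine ⟨⟨a * a', 𝓕.mul_mem d e _ a.2 _ a'.2⟩ ⊗ₜ (b * b'), by simp [inclTensor], ?_⟩
      simp only [symbolTensor, LinearMap.rTensor_tmul, Algebra.TensorProduct.tmul_mul_tmul,
        𝓕.symbol_mul]
    | add v₁ v₂ ih₁ ih₂ =>
      obtain ⟨w₁, hw₁, hw₁'⟩ := ih₁
      obtain ⟨w₂, hw₂, hw₂'⟩ := ih₂
      exact ⟨w₁ + w₂, by rw [map_add, hw₁, hw₂, map_add, mul_add],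
        by rw [map_add, hw₁', hw₂', map_add, mul_add]⟩
  | add u₁ u₂ ih₁ ih₂ =>
    obtain ⟨w₁, hw₁, hw₁'⟩ := ih₁
    obtain ⟨w₂, hw₂, hw₂'⟩ := ih₂
    exact ⟨w₁ + w₂, by rw [map_add, hw₁, hw₂, map_add, add_mul],
      by rw [map_add, hw₁', hw₂', map_add, add_mul]⟩

lemma noZeroDivisors_tensor_of_gr [NoZeroDivisors (𝓕.gr ⊗[k] B)] :
    NoZeroDivisors (A ⊗[k] B) := by
  refine ⟨fun {x y} hxy => ?_⟩
  by_contra! hne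
  obtain ⟨d, u, rfl, hu⟩ := 𝓕.exists_symbolTensor_ne_zero B hne.1
  obtain ⟨e, v, rfl, hv⟩ := 𝓕.exists_symbolTensor_ne_zero B hne.2
  obtain ⟨w, hw, hw'⟩ := 𝓕.exists_inclTensor_mul_symbolTensor_mul B d e u v
  have hw0 : w = 0 := 𝓕.inclTensor_injective B (d + e) (by rw [hw, hxy, map_zero])
  rw [hw0, map_zero] at hw'
  exact mul_ne_zero hu hv hw'.symm

end Tensor

end AlgFiltration

/-- Lemma 2.1(1): if `A` admits an ℕ-filtration whose associated graded algebra is a firm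
domain, then `A` is a firm domain. -/
theorem statement14 {k : Type v} [Field k]
    (A : Type u) [Ring A] [Algebra k A]
    (𝓕 : AlgFiltration k A) (h : IsFirmDomain k 𝓕.gr) :
    IsFirmDomain k A := by
  intro B _ _ hB
  have hgrB : IsDomain (𝓕.gr ⊗[k] B) := h B hB
  have : Nontrivial 𝓕.gr :=
    not_subsingleton_iff_nontrivial.mp fun _ => not_subsingleton (𝓕.gr ⊗[k] B) inferInstance
  have : Nontrivial A := 𝓕.nontrivial_of_nontrivial_gr
  have : Nontrivial (A ⊗[k] B) :=
    Algebra.TensorProduct.nontrivial_of_algebraMap_injective_of_flat_left k A B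
      (algebraMap k B).injective
  have : NoZeroDivisors (A ⊗[k] B) := 𝓕.noZeroDivisors_tensor_of_gr B
  exact NoZeroDivisors.to_isDomain _
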